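/- arXiv:2212.01463 — 2 statements merged into one kernel-verified Lean document; each statement's English description precedes it below -/
import Mathlib

section
/- Consider the DEJMPS purification circuit applied to two copies of a Bell-diagonal state ρ with coefficients (F1, F2, F3, F4). The probability that the measurement outcomes on qubits 3 and 4 coincide (i.e., the success probability of the protocol) equals (F1 + F2)² + (F3 + F4)². -/
open Matrix

/-- Index type for the state space of two qubits. -/
abbrev Q2 := Fin 2 × Fin 2

/-- Index type for the state space of four qubits (ordered as qubits 1, 2, 3, 4). -/
abbrev Q4 := Fin 2 × Fin 2 × Fin 2 × Fin 2

/-- The rank-one projector `|v⟩⟨v|` onto a vector `v`. -/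
def dyad {n : Type*} (v : n → ℂ) : Matrix n n ℂ :=
  fun i j => v i * (starRingEnd ℂ) (v j)

/-- The Bell state `φ+ = (|00⟩ + |11⟩)/√2`. -/
noncomputable def phiP : Q2 → ℂ :=
  fun a => ((if a = (0, 0) then 1 else 0) + (if a = (1, 1) then 1 else 0)) / (Real.sqrt 2 : ℂ)

/-- The Bell state `φ- = (|00⟩ - |11⟩)/√2`. -/
noncomputable def phiM : Q2 → ℂ :=
  fun a => ((if a = (0, 0) then 1 else 0) - (if a = (1, 1) then 1 else 0)) / (Real.sqrt 2 : ℂ)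

/-- The Bell state `ψ+ = (|01⟩ + |10⟩)/√2`. -/
noncomputable def psiP : Q2 → ℂ :=
  fun a => ((if a = (0, 1) then 1 else 0) + (if a = (1, 0) then 1 else 0)) / (Real.sqrt 2 : ℂ)

/-- The Bell state `ψ- = (|01⟩ - |10⟩)/√2`. -/
noncomputable def psiM : Q2 → ℂ :=
  fun a => ((if a = (0, 1) then 1 else 0) - (if a = (1, 0) then 1 else 0)) / (Real.sqrt 2 : ℂ)

/-- The Bell-diagonal two-qubit state with coefficients `(F1, F2, F3, F4)`:
`ρ = F1 |φ+⟩⟨φ+| + F2 |ψ-⟩⟨ψ-| + F3 |ψ+⟩⟨ψ+| + F4 |φ-⟩⟨φ-|`; its fidelity is `F1`. -/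
noncomputable def bellDiag (F1 F2 F3 F4 : ℝ) : Matrix Q2 Q2 ℂ :=
  (F1 : ℂ) • dyad phiP + (F2 : ℂ) • dyad psiM + (F3 : ℂ) • dyad psiP + (F4 : ℂ) • dyad phiM

/-- The four-qubit state in which qubit pair (1,2) and qubit pair (3,4) are each in the
two-qubit state `ρ`. -/
def pairState (ρ : Matrix Q2 Q2 ℂ) : Matrix Q4 Q4 ℂ :=
  fun a b => ρ (a.1, a.2.1) (b.1, b.2.1) * ρ (a.2.2.1, a.2.2.2) (b.2.2.1, b.2.2.2)

/-- The single-qubit rotation `Rx(π/2) = (1/√2) [[1, -i], [-i, 1]]`. -/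
noncomputable def rxP : Matrix (Fin 2) (Fin 2) ℂ :=
  ((Real.sqrt 2 : ℂ))⁻¹ • !![1, -Complex.I; -Complex.I, 1]

/-- The single-qubit rotation `Rx(-π/2) = (1/√2) [[1, i], [i, 1]]`. -/
noncomputable def rxM : Matrix (Fin 2) (Fin 2) ℂ :=
  ((Real.sqrt 2 : ℂ))⁻¹ • !![1, Complex.I; Complex.I, 1]

/-- The local rotations of the DEJMPS circuit: party A applies `Rx(π/2)` to qubits 1 and 3,
party B applies `Rx(-π/2)` to qubits 2 and 4. -/
noncomputable def dejmpsLocal : Matrix Q4 Q4 ℂ :=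
  fun a b => rxP a.1 b.1 * rxM a.2.1 b.2.1 * rxP a.2.2.1 b.2.2.1 * rxM a.2.2.2 b.2.2.2

/-- CNOT with control qubit 1 and target qubit 3. -/
def cnot13 : Matrix Q4 Q4 ℂ :=
  fun a b =>
    if a.1 = b.1 ∧ a.2.1 = b.2.1 ∧ a.2.2.1 = b.2.2.1 + b.1 ∧ a.2.2.2 = b.2.2.2 then 1 else 0

/-- CNOT with control qubit 2 and target qubit 4. -/
def cnot24 : Matrix Q4 Q4 ℂ :=
  fun a b =>
    if a.1 = b.1 ∧ a.2.1 = b.2.1 ∧ a.2.2.1 = b.2.2.1 ∧ a.2.2.2 = b.2.2.2 + b.2.1 then 1 else 0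

/-- The projector onto coinciding computational-basis measurement outcomes
on qubits 3 and 4. -/
def projEq34 : Matrix Q4 Q4 ℂ :=
  fun a b => if a = b ∧ a.2.2.1 = a.2.2.2 then 1 else 0

/-- The four-qubit state just before measurement in the DEJMPS circuit applied to two copies
of the two-qubit state `ρ` (pairs (1,2) and (3,4)): the local rotations are applied, followed
by the two CNOTs. -/
noncomputable def dejmpsFinal (ρ : Matrix Q2 Q2 ℂ) : Matrix Q4 Q4 ℂ :=
  (cnot24 * cnot13 * dejmpsLocal) * pairState ρ * (cnot24 * cnot13 * dejmpsLocal)ᴴ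


/-!
The local rotations `Rx(π/2) ⊗ Rx(-π/2)` fix `φ+` and `ψ+` and exchange `φ-` and `ψ-` up to the
phase `i`, so each pair becomes Bell-diagonal with coefficients `(F1, F4, F3, F2)`. In the
computational basis this state has weight `(F1 + F2)/2` on each of `00, 11` and `(F3 + F4)/2` on
each of `01, 10`. The bilateral CNOT is a permutation of basis states after which qubits 3 and 4
agree exactly when the pairs (1,2) and (3,4) had the same parity, an event of probability
`(F1 + F2)² + (F3 + F4)²`.
-/

open scoped Kronecker

lemma dyad_eq_vecMulVec {n : Type*} (v : n → ℂ) : dyad v = vecMulVec v (star v) := rfl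

lemma mul_dyad_mul_conjTranspose {n : Type*} [Fintype n] (M : Matrix n n ℂ) (v : n → ℂ) :
    M * dyad v * Mᴴ = dyad (M *ᵥ v) := by
  rw [dyad_eq_vecMulVec, dyad_eq_vecMulVec, mul_vecMulVec, vecMulVec_mul, star_mulVec]

lemma dyad_smul {n : Type*} (c : ℂ) (v : n → ℂ) :
    dyad (c • v) = (c * starRingEnd ℂ c) • dyad v := by
  ext i j
  simp only [dyad, Pi.smul_apply, smul_eq_mul, map_mul, Matrix.smul_apply]
  ring

lemma conjTranspose_toMatrix_toPEquiv {m n R : Type*} [DecidableEq m] [DecidableEq n]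
    [Semiring R] [StarRing R] (σ : m ≃ n) :
    (σ.toPEquiv.toMatrix : Matrix m n R)ᴴ = σ.symm.toPEquiv.toMatrix := by
  ext i j
  simp only [conjTranspose_apply, PEquiv.toMatrix_apply, Equiv.toPEquiv_apply, Option.mem_def,
    Option.some_inj, apply_ite star, star_one, star_zero]
  congr 1
  exact propext (σ.symm_apply_eq.trans eq_comm).symm

lemma toMatrix_toPEquiv_mul_mul_conjTranspose {n R : Type*} [Fintype n] [DecidableEq n]
    [Semiring R] [StarRing R] (σ : Equiv.Perm n) (M : Matrix n n R) :
    σ.toPEquiv.toMatrix * M * (σ.toPEquiv.toMatrix)ᴴ = M.submatrix σ σ := by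
  rw [conjTranspose_toMatrix_toPEquiv, PEquiv.toMatrix_toPEquiv_mul,
    PEquiv.mul_toMatrix_toPEquiv, submatrix_submatrix, Equiv.symm_symm]
  rfl

lemma submatrix_kronecker_mul_mul_conjTranspose {l m n R : Type*} [Fintype l] [Fintype m]
    [Fintype n] [CommSemiring R] [StarRing R] (e : l ≃ m × n) (A C : Matrix m m R)
    (B D : Matrix n n R) :
    (A ⊗ₖ B).submatrix e e * (C ⊗ₖ D).submatrix e e * ((A ⊗ₖ B).submatrix e e)ᴴ
      = ((A * C * Aᴴ) ⊗ₖ (B * D * Bᴴ)).submatrix e e := by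
  rw [conjTranspose_submatrix, submatrix_mul_equiv, submatrix_mul_equiv,
    conjTranspose_kronecker, mul_kronecker_mul, mul_kronecker_mul]

lemma inv_sqrt_two_mul_self : ((Real.sqrt 2 : ℂ))⁻¹ * ((Real.sqrt 2 : ℂ))⁻¹ = 1 / 2 := by
  rw [← mul_inv, ← Complex.ofReal_mul, Real.mul_self_sqrt zero_le_two]
  norm_num

lemma rxP_kronecker_rxM :
    rxP ⊗ₖ rxM
      = (1 / 2 : ℂ) • (!![1, -Complex.I; -Complex.I, 1] ⊗ₖ !![1, Complex.I; Complex.I, 1]) := by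
  rw [rxP, rxM, smul_kronecker, kronecker_smul, smul_smul, inv_sqrt_two_mul_self]

lemma rxP_kronecker_rxM_mulVec_phiP : (rxP ⊗ₖ rxM) *ᵥ phiP = phiP := by
  rw [rxP_kronecker_rxM]
  ext ⟨a, b⟩
  fin_cases a <;> fin_cases b <;>
    simp [mulVec, dotProduct, Fintype.sum_prod_type, phiP] <;> ring

lemma rxP_kronecker_rxM_mulVec_psiP : (rxP ⊗ₖ rxM) *ᵥ psiP = psiP := by
  rw [rxP_kronecker_rxM]
  ext ⟨a, b⟩
  fin_cases a <;> fin_cases b <;>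
    simp [mulVec, dotProduct, Fintype.sum_prod_type, psiP] <;> ring

lemma rxP_kronecker_rxM_mulVec_phiM : (rxP ⊗ₖ rxM) *ᵥ phiM = Complex.I • psiM := by
  rw [rxP_kronecker_rxM]
  ext ⟨a, b⟩
  fin_cases a <;> fin_cases b <;>
    simp [mulVec, dotProduct, Fintype.sum_prod_type, phiM, psiM] <;> ring

lemma rxP_kronecker_rxM_mulVec_psiM : (rxP ⊗ₖ rxM) *ᵥ psiM = Complex.I • phiM := by
  rw [rxP_kronecker_rxM]
  ext ⟨a, b⟩
  fin_cases a <;> fin_cases b <;>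
    simp [mulVec, dotProduct, Fintype.sum_prod_type, phiM, psiM] <;> ring

lemma rxP_kronecker_rxM_conj_bellDiag (F1 F2 F3 F4 : ℝ) :
    (rxP ⊗ₖ rxM) * bellDiag F1 F2 F3 F4 * (rxP ⊗ₖ rxM)ᴴ = bellDiag F1 F4 F3 F2 := by
  simp only [bellDiag, Matrix.mul_add, Matrix.add_mul, Matrix.mul_smul, Matrix.smul_mul,
    mul_dyad_mul_conjTranspose, rxP_kronecker_rxM_mulVec_phiP, rxP_kronecker_rxM_mulVec_psiP,
    rxP_kronecker_rxM_mulVec_phiM, rxP_kronecker_rxM_mulVec_psiM, dyad_smul, Complex.mul_conj,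
    Complex.normSq_I, Complex.ofReal_one, one_smul]
  abel

lemma bellDiag_apply_self (F1 F2 F3 F4 : ℝ) (x y : Fin 2) :
    bellDiag F1 F2 F3 F4 (x, y) (x, y)
      = if x = y then ((F1 + F4 : ℝ) : ℂ) / 2 else ((F2 + F3 : ℝ) : ℂ) / 2 := by
  fin_cases x <;> fin_cases y <;>
    simp [bellDiag, dyad, phiP, phiM, psiP, psiM, div_eq_mul_inv, inv_sqrt_two_mul_self] <;> ring

def pairSplit : Q4 ≃ Q2 × Q2 := (Equiv.prodAssoc (Fin 2) (Fin 2) Q2).symm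

lemma pairState_eq_submatrix_kronecker (ρ : Matrix Q2 Q2 ℂ) :
    pairState ρ = (ρ ⊗ₖ ρ).submatrix pairSplit pairSplit := rfl

lemma dejmpsLocal_eq_submatrix_kronecker :
    dejmpsLocal = ((rxP ⊗ₖ rxM) ⊗ₖ (rxP ⊗ₖ rxM)).submatrix pairSplit pairSplit := by
  ext a b
  simp only [dejmpsLocal, pairSplit, submatrix_apply, Equiv.prodAssoc_symm_apply,
    kroneckerMap_apply]
  ring

def cnotPerm13 : Equiv.Perm Q4 :=
  Function.Involutive.toPerm (fun a => (a.1, a.2.1, a.2.2.1 + a.1, a.2.2.2))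
    (by unfold Function.Involutive; decide)

def cnotPerm24 : Equiv.Perm Q4 :=
  Function.Involutive.toPerm (fun a => (a.1, a.2.1, a.2.2.1, a.2.2.2 + a.2.1))
    (by unfold Function.Involutive; decide)

lemma cnot13_eq_toMatrix : cnot13 = cnotPerm13.toPEquiv.toMatrix := by
  ext a b
  simp only [cnot13, PEquiv.toMatrix_apply, Equiv.toPEquiv_apply, Option.mem_def,
    Option.some_inj]
  congr 1
  revert a b
  decide

lemma cnot24_eq_toMatrix : cnot24 = cnotPerm24.toPEquiv.toMatrix := by
  ext a b
  simp only [cnot24, PEquiv.toMatrix_apply, Equiv.toPEquiv_apply, Option.mem_def,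
    Option.some_inj]
  congr 1
  revert a b
  decide

lemma dejmpsFinal_eq_submatrix (ρ : Matrix Q2 Q2 ℂ) :
    dejmpsFinal ρ = (dejmpsLocal * pairState ρ * dejmpsLocalᴴ).submatrix
      (cnotPerm24.trans cnotPerm13) (cnotPerm24.trans cnotPerm13) := by
  rw [dejmpsFinal, cnot13_eq_toMatrix, cnot24_eq_toMatrix, Equiv.coe_trans,
    ← submatrix_submatrix, ← toMatrix_toPEquiv_mul_mul_conjTranspose,
    ← toMatrix_toPEquiv_mul_mul_conjTranspose]
  simp only [conjTranspose_mul, Matrix.mul_assoc]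

lemma trace_projEq34_mul_mul (X : Matrix Q4 Q4 ℂ) :
    trace (projEq34 * X * projEq34) = ∑ a : Q4, if a.2.2.1 = a.2.2.2 then X a a else 0 := by
  simp +contextual [trace, mul_apply, projEq34, ite_and]

lemma trace_projEq34_dejmpsFinal {ρ σ : Matrix Q2 Q2 ℂ}
    (hσ : (rxP ⊗ₖ rxM) * ρ * (rxP ⊗ₖ rxM)ᴴ = σ) :
    trace (projEq34 * dejmpsFinal ρ * projEq34)
      = ∑ x : Q2, ∑ c : Fin 2, σ x x * σ (c + x.1, c + x.2) (c + x.1, c + x.2) := by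
  rw [trace_projEq34_mul_mul, dejmpsFinal_eq_submatrix, pairState_eq_submatrix_kronecker,
    dejmpsLocal_eq_submatrix_kronecker, submatrix_kronecker_mul_mul_conjTranspose, hσ]
  simp [Fintype.sum_prod_type, pairSplit, cnotPerm13, cnotPerm24]

theorem dejmps_success_probability_general (F1 F2 F3 F4 : ℝ) :
    Matrix.trace (projEq34 * dejmpsFinal (bellDiag F1 F2 F3 F4) * projEq34)
      = (((F1 + F2) ^ 2 + (F3 + F4) ^ 2 : ℝ) : ℂ) := by
  rw [trace_projEq34_dejmpsFinal (rxP_kronecker_rxM_conj_bellDiag F1 F2 F3 F4)]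
  simp [Fintype.sum_prod_type, bellDiag_apply_self]
  ring

/-- Success probability of the DEJMPS protocol on two copies of a Bell-diagonal state with
coefficients `(F1, F2, F3, F4)`: the probability that the computational-basis measurement
outcomes on qubits 3 and 4 coincide equals `(F1 + F2)² + (F3 + F4)²`. -/
theorem dejmps_success_probability (F1 F2 F3 F4 : ℝ)
    (h1 : 0 ≤ F1) (h2 : 0 ≤ F2) (h3 : 0 ≤ F3) (h4 : 0 ≤ F4)
    (hsum : F1 + F2 + F3 + F4 = 1) :
    Matrix.trace (projEq34 * dejmpsFinal (bellDiag F1 F2 F3 F4) * projEq34)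
      = (((F1 + F2) ^ 2 + (F3 + F4) ^ 2 : ℝ) : ℂ) :=
  dejmps_success_probability_general F1 F2 F3 F4
end

section
/- Define h(F) = F² / (F² + (1 − F)²) and let h^{∘L} denote its L-fold iterate. Then for every F with 1/2 < F < 1 and every threshold F^{th} < 1, there exists an integer L ≥ 0 such that h^{∘L}(F) ≥ F^{th}; that is, iterated DEJMPS purification of binary states drives the fidelity arbitrarily close to 1. -/
/-- The DEJMPS output fidelity map for binary input states:
`h(F) = F² / (F² + (1 - F)²)`. -/
noncomputable def dejmpsBinaryFid (F : ℝ) : ℝ := F ^ 2 / (F ^ 2 + (1 - F) ^ 2)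

open Filter Topology

/-!
Writing a fidelity as `F = 1 / (1 + r)`, where `r = (1 - F) / F` is the ratio of the
`ψ⁺` weight to the `φ⁺` weight, one round of DEJMPS squares this ratio. Hence
`h^[L] F = 1 / (1 + r ^ 2 ^ L)`, and `F > 1/2` means `|r| < 1`, so `r ^ 2 ^ L → 0` and the
fidelity tends to `1`.
-/

theorem dejmpsBinaryFid_inv_one_add {r : ℝ} (hr : r ≠ -1) :
    dejmpsBinaryFid (1 + r)⁻¹ = (1 + r ^ 2)⁻¹ := by
  have hr' : 1 + r ≠ 0 := fun h => hr (by linarith)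
  have hsq : 1 + r ^ 2 ≠ 0 := by positivity
  unfold dejmpsBinaryFid
  field_simp
  ring

theorem dejmpsBinaryFid_iterate_inv_one_add (n : ℕ) {r : ℝ} (hr : r ≠ -1) :
    dejmpsBinaryFid^[n] (1 + r)⁻¹ = (1 + r ^ 2 ^ n)⁻¹ := by
  induction n generalizing r with
  | zero => simp
  | succ n ih =>
    have hsq : r ^ 2 ≠ -1 := by nlinarith [sq_nonneg r]
    rw [Function.iterate_succ_apply, dejmpsBinaryFid_inv_one_add hr, ih hsq, ← pow_mul,
      ← pow_succ']

theorem tendsto_dejmpsBinaryFid_iterate {F : ℝ} (hF : 1 / 2 < F) :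
    Tendsto (fun n => dejmpsBinaryFid^[n] F) atTop (𝓝 1) := by
  set r := F⁻¹ - 1
  have hFr : F = (1 + r)⁻¹ := by simp [r]
  have hF_inv_lt : F⁻¹ < 2 := by
    rw [inv_lt_comm₀ (by linarith) two_pos]; linarith
  have hr_abs : |r| < 1 := by
    rw [abs_lt]; constructor <;> linarith [inv_pos.2 (show 0 < F by linarith)]
  have hpow : Tendsto (fun n : ℕ => r ^ 2 ^ n) atTop (𝓝 0) :=
    (tendsto_pow_atTop_nhds_zero_of_abs_lt_one hr_abs).comp
      (tendsto_pow_atTop_atTop_of_one_lt one_lt_two)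
  have hlim := (hpow.const_add 1).inv₀ (by norm_num)
  rw [add_zero, inv_one] at hlim
  rw [hFr]
  exact hlim.congr fun n =>
    (dejmpsBinaryFid_iterate_inv_one_add n (abs_lt.1 hr_abs).1.ne').symm

theorem dejmpsBinaryFid_iterate_reaches_threshold_general
    (F : ℝ) (h1 : 1 / 2 < F) (Fth : ℝ) (hFth : Fth < 1) :
    ∃ L : ℕ, Fth ≤ dejmpsBinaryFid^[L] F :=
  ((tendsto_dejmpsBinaryFid_iterate h1).eventually (eventually_ge_nhds hFth)).exists

/-- Iterated DEJMPS purification of binary states drives the fidelity arbitrarily close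
to `1`: for every `1/2 < F < 1` and every threshold `Fth < 1`, finitely many rounds `L`
suffice to reach `h^[L] F ≥ Fth`. -/
theorem dejmpsBinaryFid_iterate_reaches_threshold
    (F : ℝ) (h1 : 1 / 2 < F) (h2 : F < 1) (Fth : ℝ) (hFth : Fth < 1) :
    ∃ L : ℕ, Fth ≤ dejmpsBinaryFid^[L] F :=
  dejmpsBinaryFid_iterate_reaches_threshold_general F h1 Fth hFth
end
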